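/- Fix 0 < s < 1 and for B > 0 define I(B) = ∫_0^1 ( (4/(1+s)²)(1-k²) + B^{-1-s}·(2/(1-s))·(1-k^{1-s}) )^{-1/2} dk. Then I is continuous on (0,∞), lim_{B→0⁺} I(B) = 0, and lim_{B→∞} I(B) = (1+s)π/4. -/

import Mathlib

/-!
With `t = B^{-1-s}` the integral is `J(t) = ∫₀¹ (a (1 - k²) + t g(k))^{-1/2} dk` with
`a = 4/(1+s)²` and `g(k) = (2/(1-s))(1 - k^{1-s}) > 0`. For `t ≥ 0` the integrand is dominated by
its value at `t = 0`, which is integrable since `(1 - k²)^{-1/2}` is the derivative of `arcsin`.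
Dominated convergence gives continuity of `J` on `[0, ∞)` and `J(t) → 0` as `t → ∞`; since
`B ↦ B^{-1-s}` sends `B → 0⁺` to `t → ∞` and `B → ∞` to `t → 0⁺`, the limits of `I` are
`0` and `J(0) = a^{-1/2} π/2 = (1+s)π/4`.
-/

open Real MeasureTheory Set Filter Topology

lemma hasDerivAt_arcsin_eq_rpow {x : ℝ} (hx : x ∈ Ioo (-1 : ℝ) 1) :
    HasDerivAt arcsin ((1 - x ^ 2) ^ (-(1 : ℝ) / 2)) x := by
  have h : (0 : ℝ) ≤ 1 - x ^ 2 := by nlinarith [hx.1, hx.2]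
  convert hasDerivAt_arcsin hx.1.ne' hx.2.ne using 1
  rw [neg_div, rpow_neg h, sqrt_eq_rpow, inv_eq_one_div]

lemma intervalIntegrable_one_sub_sq_rpow_neg_half :
    IntervalIntegrable (fun x : ℝ => (1 - x ^ 2) ^ (-(1 : ℝ) / 2)) volume 0 1 := by
  have hIoo : Ioo (min 0 1) (max 0 1) ⊆ Ioo (-1 : ℝ) 1 := by
    rw [min_eq_left zero_le_one, max_eq_right zero_le_one]
    exact Ioo_subset_Ioo_left (by norm_num)
  exact intervalIntegral.intervalIntegrable_deriv_of_nonneg continuous_arcsin.continuousOn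
    (fun x hx => hasDerivAt_arcsin_eq_rpow (hIoo hx))
    (fun x hx => rpow_nonneg (by nlinarith [(hIoo hx).1, (hIoo hx).2]) _)

lemma integral_one_sub_sq_rpow_neg_half :
    ∫ x in (0 : ℝ)..1, (1 - x ^ 2) ^ (-(1 : ℝ) / 2) = π / 2 := by
  rw [intervalIntegral.integral_eq_sub_of_hasDerivAt_of_le zero_le_one
    continuous_arcsin.continuousOn
    (fun x hx => hasDerivAt_arcsin_eq_rpow ⟨by linarith [hx.1], hx.2⟩)
    intervalIntegrable_one_sub_sq_rpow_neg_half, arcsin_one, arcsin_zero, sub_zero]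

lemma sq_rpow_neg_half {x : ℝ} (hx : 0 ≤ x) : (x ^ 2) ^ (-(1 : ℝ) / 2) = x⁻¹ := by
  rw [← rpow_natCast, ← rpow_mul hx]; norm_num [rpow_neg_one]

lemma integrableOn_mul_one_sub_sq_rpow_neg_half {a : ℝ} (ha : 0 ≤ a) :
    IntegrableOn (fun k : ℝ => (a * (1 - k ^ 2)) ^ (-(1 : ℝ) / 2)) (Ioo 0 1) := by
  have h := ((intervalIntegrable_iff_integrableOn_Ioo_of_le zero_le_one).1
    intervalIntegrable_one_sub_sq_rpow_neg_half).const_mul (a ^ (-(1 : ℝ) / 2))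
  refine IntegrableOn.congr_fun h (fun k hk => ?_) measurableSet_Ioo
  rw [mul_rpow ha (by nlinarith [hk.1, hk.2])]

lemma integral_mul_one_sub_sq_rpow_neg_half {a : ℝ} (ha : 0 ≤ a) :
    ∫ k in Ioo (0 : ℝ) 1, (a * (1 - k ^ 2)) ^ (-(1 : ℝ) / 2) = a ^ (-(1 : ℝ) / 2) * (π / 2) := by
  rw [← integral_one_sub_sq_rpow_neg_half, intervalIntegral.integral_of_le zero_le_one,
    integral_Ioc_eq_integral_Ioo, ← integral_const_mul]
  refine setIntegral_congr_fun measurableSet_Ioo (fun k hk => ?_)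
  rw [mul_rpow ha (by nlinarith [hk.1, hk.2])]

noncomputable def perturbedArcsinIntegral (a : ℝ) (g : ℝ → ℝ) (t : ℝ) : ℝ :=
  ∫ k in Ioo (0 : ℝ) 1, (a * (1 - k ^ 2) + t * g k) ^ (-(1 : ℝ) / 2)

namespace perturbedArcsinIntegral

variable {a : ℝ} {g : ℝ → ℝ}

lemma integrand_le (ha : 0 < a) {t k : ℝ} (ht : 0 ≤ t) (hk : k ∈ Ioo (0 : ℝ) 1) (hgk : 0 ≤ g k) :
    ‖(a * (1 - k ^ 2) + t * g k) ^ (-(1 : ℝ) / 2)‖ ≤ (a * (1 - k ^ 2)) ^ (-(1 : ℝ) / 2) := by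
  have hbase : 0 < a * (1 - k ^ 2) := mul_pos ha (by nlinarith [hk.1, hk.2])
  rw [norm_of_nonneg (rpow_nonneg (by positivity) _)]
  exact rpow_le_rpow_of_nonpos hbase (by simpa using mul_nonneg ht hgk) (by norm_num)

lemma aestronglyMeasurable_integrand (hg_meas : Measurable g) (t : ℝ) :
    AEStronglyMeasurable (fun k => (a * (1 - k ^ 2) + t * g k) ^ (-(1 : ℝ) / 2))
      (volume.restrict (Ioo 0 1)) :=
  Measurable.aestronglyMeasurable (by fun_prop)

lemma eq_at_zero (ha : 0 ≤ a) : perturbedArcsinIntegral a g 0 = a ^ (-(1 : ℝ) / 2) * (π / 2) := by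
  simpa [perturbedArcsinIntegral] using integral_mul_one_sub_sq_rpow_neg_half ha

lemma continuousOn (ha : 0 < a) (hg_meas : Measurable g) (hg : ∀ k ∈ Ioo (0 : ℝ) 1, 0 ≤ g k) :
    ContinuousOn (perturbedArcsinIntegral a g) (Ici 0) := by
  unfold perturbedArcsinIntegral
  refine continuousOn_of_dominated (fun t _ => aestronglyMeasurable_integrand hg_meas t)
    (fun t ht => ?_) (integrableOn_mul_one_sub_sq_rpow_neg_half ha.le) ?_
  · filter_upwards [ae_restrict_mem measurableSet_Ioo] with k hk
    exact integrand_le ha ht hk (hg k hk)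
  · filter_upwards [ae_restrict_mem measurableSet_Ioo] with k hk
    refine ContinuousOn.rpow_const (by fun_prop) (fun t ht => Or.inl ?_)
    have := mul_nonneg (mem_Ici.1 ht) (hg k hk)
    have := mul_pos ha (show 0 < 1 - k ^ 2 by nlinarith [hk.1, hk.2])
    positivity

lemma tendsto_atTop (ha : 0 < a) (hg_meas : Measurable g) (hg : ∀ k ∈ Ioo (0 : ℝ) 1, 0 < g k) :
    Tendsto (perturbedArcsinIntegral a g) atTop (𝓝 0) := by
  unfold perturbedArcsinIntegral
  convert tendsto_integral_filter_of_dominated_convergence (l := atTop) (f := fun _ => 0) _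
    (.of_forall fun t => aestronglyMeasurable_integrand hg_meas t) ?_
    (integrableOn_mul_one_sub_sq_rpow_neg_half ha.le) ?_ using 2
  · simp
  · filter_upwards [eventually_ge_atTop 0] with t ht
    filter_upwards [ae_restrict_mem measurableSet_Ioo] with k hk
    exact integrand_le ha ht hk (hg k hk).le
  · filter_upwards [ae_restrict_mem measurableSet_Ioo] with k hk
    have hbase : Tendsto (fun t => a * (1 - k ^ 2) + t * g k) atTop atTop :=
      tendsto_atTop_add_const_left _ _ (tendsto_id.atTop_mul_const (hg k hk))
    exact (neg_div 2 (1 : ℝ) ▸ tendsto_rpow_neg_atTop (by norm_num : (0 : ℝ) < 1 / 2)).comp hbase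

end perturbedArcsinIntegral

/-- Properties of the shooting integral
`I(B) = ∫_0^1 ((4/(1+s)²)(1-k²) + B^{-1-s}(2/(1-s))(1-k^{1-s}))^{-1/2} dk`:
it is continuous on `(0,∞)`, tends to `0` as `B → 0⁺`, and tends to `(1+s)π/4` as `B → ∞`. -/
theorem shooting_integral_properties (s : ℝ) (hs : 0 < s) (hs1 : s < 1) :
    ContinuousOn
      (fun B : ℝ => ∫ k in Set.Ioo (0 : ℝ) 1,
        ((4 / (1 + s) ^ 2) * (1 - k ^ 2)
          + B ^ (-1 - s) * (2 / (1 - s)) * (1 - k ^ (1 - s))) ^ (-(1 : ℝ) / 2))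
      (Set.Ioi 0) ∧
    Filter.Tendsto
      (fun B : ℝ => ∫ k in Set.Ioo (0 : ℝ) 1,
        ((4 / (1 + s) ^ 2) * (1 - k ^ 2)
          + B ^ (-1 - s) * (2 / (1 - s)) * (1 - k ^ (1 - s))) ^ (-(1 : ℝ) / 2))
      (nhdsWithin 0 (Set.Ioi 0)) (nhds 0) ∧
    Filter.Tendsto
      (fun B : ℝ => ∫ k in Set.Ioo (0 : ℝ) 1,
        ((4 / (1 + s) ^ 2) * (1 - k ^ 2)
          + B ^ (-1 - s) * (2 / (1 - s)) * (1 - k ^ (1 - s))) ^ (-(1 : ℝ) / 2))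
      Filter.atTop (nhds ((1 + s) * π / 4)) := by
  set g : ℝ → ℝ := fun k => 2 / (1 - s) * (1 - k ^ (1 - s))
  have h_subst : (fun B : ℝ => ∫ k in Ioo (0 : ℝ) 1,
      ((4 / (1 + s) ^ 2) * (1 - k ^ 2) + B ^ (-1 - s) * (2 / (1 - s)) * (1 - k ^ (1 - s))) ^
        (-(1 : ℝ) / 2)) = perturbedArcsinIntegral (4 / (1 + s) ^ 2) g ∘ fun B => B ^ (-1 - s) := by
    funext B
    simp only [Function.comp_apply, perturbedArcsinIntegral, g, mul_assoc]
  have ha : (0 : ℝ) < 4 / (1 + s) ^ 2 := by positivity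
  have hg_meas : Measurable g := by fun_prop
  have hg : ∀ k ∈ Ioo (0 : ℝ) 1, 0 < g k := fun k hk =>
    mul_pos (div_pos two_pos (sub_pos.2 hs1)) (sub_pos.2 (rpow_lt_one hk.1.le hk.2 (by linarith)))
  have hcont := perturbedArcsinIntegral.continuousOn ha hg_meas fun k hk => (hg k hk).le
  rw [h_subst]
  refine ⟨hcont.comp (continuousOn_id.rpow_const fun B hB => Or.inl (ne_of_gt hB))
      fun B hB => mem_Ici.2 (rpow_nonneg (le_of_lt hB) _),
    (perturbedArcsinIntegral.tendsto_atTop ha hg_meas hg).comp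
      (tendsto_rpow_neg_nhdsGT_zero (by linarith)), ?_⟩
  have ht : Tendsto (fun B : ℝ => B ^ (-1 - s)) atTop (𝓝[≥] 0) :=
    tendsto_nhdsWithin_iff.2
      ⟨by simpa only [neg_add'] using tendsto_rpow_neg_atTop (by linarith : 0 < 1 + s),
        (eventually_ge_atTop 0).mono fun B hB => rpow_nonneg hB _⟩
  have hlim := ((hcont 0 self_mem_Ici).tendsto).comp ht
  have hvalue : (4 / (1 + s) ^ 2) ^ (-(1 : ℝ) / 2) * (π / 2) = (1 + s) * π / 4 := by
    rw [show 4 / (1 + s) ^ 2 = (2 / (1 + s)) ^ 2 by rw [div_pow]; norm_num,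
      sq_rpow_neg_half (by positivity), inv_div]
    ring
  rwa [perturbedArcsinIntegral.eq_at_zero ha.le, hvalue] at hlim
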